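/- (Limit of the velocity component.) Let u_l > u_r, ρ_l, ρ_r > 0, and for ε ∈ (0, η) let (u*_ε, ρ*_ε), s₁(ε), s₂(ε) be as in the two-shock Riemann solution: u_r < u*_ε < u_l, ρ*_ε > max(ρ_l, ρ_r), (u*_ε − u_l)²·(ρ*_ε + ρ_l)/2 = ε·(ρ*_ε − ρ_l)·(p(ρ*_ε) − p(ρ_l)), (u*_ε − u_r)²·(ρ*_ε + ρ_r)/2 = ε·(ρ*_ε − ρ_r)·(p(ρ*_ε) − p(ρ_r)), s₁(ε) = (u*_ε + u_l)/2 + ε·(p(ρ*_ε) − p(ρ_l))/(u*_ε − u_l), s₂(ε) = (u*_ε + u_r)/2 + ε·(p(ρ*_ε) − p(ρ_r))/(u*_ε − u_r). Define u^ε(x,t) = u_l if x < s₁(ε)t, u^ε(x,t) = u*_ε if s₁(ε)t < x < s₂(ε)t, and u^ε(x,t) = u_r if x > s₂(ε)t. Then for every smooth compactly supported test function φ on ℝ × (0,∞), lim_{ε→0} ∫₀^∞ ∫_ℝ u^ε(x,t)·φ(x,t) dx dt = ∫₀^∞ ∫_{−∞}^{ct} u_l·φ(x,t) dx dt + ∫₀^∞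 ∫_{ct}^{∞} u_r·φ(x,t) dx dt, where c = (u_l + u_r)/2. -/

import Mathlib

open Real Filter Topology MeasureTheory

/-- The pressure-like function `p(ρ) = ∫₀^ρ ξ·e^ξ dξ`. -/
noncomputable def p (ρ : ℝ) : ℝ := ∫ ξ in (0:ℝ)..ρ, ξ * Real.exp ξ

lemma p_eq (ρ : ℝ) : p ρ = (ρ - 1) * Real.exp ρ + 1 := by
  have h : ∀ x ∈ Set.uIcc (0:ℝ) ρ, HasDerivAt (fun x : ℝ => (x - 1) * Real.exp x) (x * Real.exp x) x := by
    intro x _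
    have := ((hasDerivAt_id x).sub_const 1).mul (Real.hasDerivAt_exp x)
    exact this.congr_deriv (by simp only [id_eq]; ring)
  have hc : IntervalIntegrable (fun x : ℝ => x * Real.exp x) volume 0 ρ :=
    (continuous_id.mul Real.continuous_exp).intervalIntegrable 0 ρ
  have := intervalIntegral.integral_eq_sub_of_hasDerivAt h hc
  simp only [p, this]
  simp [Real.exp_zero]

lemma p_strictMono : StrictMonoOn p (Set.Ici (0:ℝ)) := by
  have hsm : StrictMonoOn (fun x : ℝ => (x - 1) * Real.exp x + 1) (Set.Ici 0) := by
    apply strictMonoOn_of_deriv_pos (convex_Ici 0)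
    · exact (((continuous_id.sub continuous_const).mul Real.continuous_exp).add continuous_const).continuousOn
    · intro x hx
      rw [interior_Ici] at hx
      have hd : HasDerivAt (fun x : ℝ => (x - 1) * Real.exp x + 1) (x * Real.exp x) x := by
        have := (((hasDerivAt_id x).sub_const 1).mul (Real.hasDerivAt_exp x)).add_const 1
        exact this.congr_deriv (by simp only [id_eq]; ring)
      rw [hd.deriv]
      exact mul_pos hx (Real.exp_pos x)
  intro a ha b hb hab
  simp only [p_eq]
  exact hsm ha hb hab

lemma p_mono : MonotoneOn p (Set.Ici (0:ℝ)) := p_strictMono.monotoneOn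

lemma p_nonneg {ρ : ℝ} (h : 0 ≤ ρ) : 0 ≤ p ρ := by
  have h0 : p 0 = 0 := by simp [p]
  have := p_mono Set.self_mem_Ici h h
  rw [h0] at this; exact this

lemma p_atTop : Tendsto p atTop atTop := by
  apply tendsto_atTop_mono' _ _ tendsto_id
  filter_upwards [eventually_ge_atTop (1:ℝ)] with x hx
  rw [p_eq]
  have h1 : 1 ≤ Real.exp x := Real.one_le_exp (by linarith)
  simp only [id_eq]
  nlinarith [mul_nonneg (by linarith : (0:ℝ) ≤ x - 1) (by linarith : (0:ℝ) ≤ Real.exp x - 1)]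

lemma ratio_tendsto (a b : ℝ) : Tendsto (fun x : ℝ => (x + a) / (x + b)) atTop (𝓝 1) := by
  have ha : Tendsto (fun x : ℝ => 1 + a * x⁻¹) atTop (𝓝 (1 + a * 0)) :=
    tendsto_const_nhds.add (tendsto_const_nhds.mul tendsto_inv_atTop_zero)
  have hb : Tendsto (fun x : ℝ => 1 + b * x⁻¹) atTop (𝓝 (1 + b * 0)) :=
    tendsto_const_nhds.add (tendsto_const_nhds.mul tendsto_inv_atTop_zero)
  have hdiv : Tendsto (fun x : ℝ => (1 + a * x⁻¹) / (1 + b * x⁻¹)) atTop (𝓝 ((1 + a * 0) / (1 + b * 0))) :=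
    ha.div hb (by norm_num)
  have h1 : ((1:ℝ) + a * 0) / (1 + b * 0) = 1 := by norm_num
  rw [h1] at hdiv
  apply hdiv.congr'
  filter_upwards [eventually_gt_atTop (max |b| 1)] with x hx
  have hx0 : x ≠ 0 := by
    have := lt_of_le_of_lt (le_max_right |b| 1) hx; positivity
  have hxb : x + b ≠ 0 := by
    have h1 : |b| < x := lt_of_le_of_lt (le_max_left |b| 1) hx
    have := neg_abs_le b; linarith
  field_simp

set_option maxHeartbeats 2000000 in
/-- Limit of the velocity component: as `ε → 0⁺`, the velocity `u^ε` of the two-shock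
Riemann solution converges in the sense of distributions to
`u_l χ_{x < ct} + u_r χ_{x > ct}` with `c = (u_l + u_r)/2`. -/
theorem stmt11 (ul ur ρl ρr η : ℝ) (hu : ur < ul) (hρl : 0 < ρl) (hρr : 0 < ρr)
    (hη : 0 < η) (us ρs s1 s2 : ℝ → ℝ)
    (hmem : ∀ ε ∈ Set.Ioo (0:ℝ) η, ur < us ε ∧ us ε < ul ∧ max ρl ρr < ρs ε)
    (heq1 : ∀ ε ∈ Set.Ioo (0:ℝ) η,
      (us ε - ul) ^ 2 * (ρs ε + ρl) / 2 = ε * (ρs ε - ρl) * (p (ρs ε) - p ρl))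
    (heq2 : ∀ ε ∈ Set.Ioo (0:ℝ) η,
      (us ε - ur) ^ 2 * (ρs ε + ρr) / 2 = ε * (ρs ε - ρr) * (p (ρs ε) - p ρr))
    (hs1 : ∀ ε, s1 ε = (us ε + ul) / 2 + ε * (p (ρs ε) - p ρl) / (us ε - ul))
    (hs2 : ∀ ε, s2 ε = (us ε + ur) / 2 + ε * (p (ρs ε) - p ρr) / (us ε - ur))
    (φ : ℝ × ℝ → ℝ) (hφ : ContDiff ℝ (⊤ : ℕ∞) φ) (hcs : HasCompactSupport φ)
    (hsupp : tsupport φ ⊆ Set.univ ×ˢ Set.Ioi 0) :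
    Tendsto (fun ε => ∫ t in Set.Ioi (0:ℝ), ∫ x : ℝ,
        (if x < s1 ε * t then ul else if x < s2 ε * t then us ε else ur) * φ (x, t))
      (𝓝[>] (0:ℝ))
      (𝓝 ((∫ t in Set.Ioi (0:ℝ), ∫ x in Set.Iio ((ul + ur) / 2 * t), ul * φ (x, t)) +
          ∫ t in Set.Ioi (0:ℝ), ∫ x in Set.Ioi ((ul + ur) / 2 * t), ur * φ (x, t))) := by
  have hIoo : Set.Ioo (0:ℝ) η ∈ 𝓝[>] (0:ℝ) := Ioo_mem_nhdsGT_of_mem ⟨le_refl 0, hη⟩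
  set c : ℝ := (ul + ur) / 2 with hc
  set d : ℝ := (ul - ur) / 2 with hd
  have hdpos : 0 < d := by rw [hd]; linarith
  -- basic facts
  have hbasic : ∀ ε ∈ Set.Ioo (0:ℝ) η, ρl < ρs ε ∧ ρr < ρs ε ∧ 0 < ρs ε ∧
      p ρl < p (ρs ε) ∧ p ρr < p (ρs ε) := by
    intro ε hε
    obtain ⟨h1, h2, h3⟩ := hmem ε hε
    have hρsl : ρl < ρs ε := lt_of_le_of_lt (le_max_left _ _) h3
    have hρsr : ρr < ρs ε := lt_of_le_of_lt (le_max_right _ _) h3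
    have hρs0 : 0 < ρs ε := lt_trans hρl hρsl
    exact ⟨hρsl, hρsr, hρs0, p_strictMono hρl.le hρs0.le hρsl,
      p_strictMono hρr.le hρs0.le hρsr⟩
  have key : ∀ ε ∈ Set.Ioo (0:ℝ) η, d ^ 2 ≤ 2 * ε * p (ρs ε) := by
    intro ε hε
    obtain ⟨h1, h2, h3⟩ := hmem ε hε
    obtain ⟨hρsl, hρsr, hρs0, hpl, hpr⟩ := hbasic ε hε
    have hplnn : 0 ≤ p ρl := p_nonneg hρl.le
    have hprnn : 0 ≤ p ρr := p_nonneg hρr.le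
    have hε0 : 0 < ε := hε.1
    rcases le_or_gt d (ul - us ε) with h | h
    · have e1 := heq1 ε hε
      have hsq : d ^ 2 ≤ (us ε - ul) ^ 2 := by
        have : (us ε - ul) ^ 2 = (ul - us ε) ^ 2 := by ring
        rw [this]
        exact pow_le_pow_left₀ hdpos.le h 2
      have hstep1 : d ^ 2 * ρs ε ≤ (us ε - ul) ^ 2 * (ρs ε + ρl) :=
        le_trans (mul_le_mul_of_nonneg_right hsq hρs0.le)
          (mul_le_mul_of_nonneg_left (by linarith) (sq_nonneg _))
      have hstep2 : (ρs ε - ρl) * (p (ρs ε) - p ρl) ≤ ρs ε * p (ρs ε) := by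
        nlinarith [mul_nonneg hplnn (sub_nonneg.2 hρsl.le),
          mul_nonneg hρl.le (le_trans hplnn hpl.le)]
      have hstep2' := mul_le_mul_of_nonneg_left hstep2 (by positivity : (0:ℝ) ≤ 2 * ε)
      have hA : d ^ 2 * ρs ε ≤ 2 * ε * p (ρs ε) * ρs ε := by linarith
      exact le_of_mul_le_mul_right hA hρs0
    · have h' : d ≤ us ε - ur := by rw [hd] at h ⊢; linarith
      have e2 := heq2 ε hε
      have hsq : d ^ 2 ≤ (us ε - ur) ^ 2 := pow_le_pow_left₀ hdpos.le h' 2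
      have hstep1 : d ^ 2 * ρs ε ≤ (us ε - ur) ^ 2 * (ρs ε + ρr) :=
        le_trans (mul_le_mul_of_nonneg_right hsq hρs0.le)
          (mul_le_mul_of_nonneg_left (by linarith) (sq_nonneg _))
      have hstep2 : (ρs ε - ρr) * (p (ρs ε) - p ρr) ≤ ρs ε * p (ρs ε) := by
        nlinarith [mul_nonneg hprnn (sub_nonneg.2 hρsr.le),
          mul_nonneg hρr.le (le_trans hprnn hpr.le)]
      have hstep2' := mul_le_mul_of_nonneg_left hstep2 (by positivity : (0:ℝ) ≤ 2 * ε)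
      have hA : d ^ 2 * ρs ε ≤ 2 * ε * p (ρs ε) * ρs ε := by linarith
      exact le_of_mul_le_mul_right hA hρs0
  have hρtop : Tendsto ρs (𝓝[>] (0:ℝ)) atTop := by
    rw [tendsto_atTop]
    intro M
    set M' := max M 1 with hM'def
    have hM' : (0:ℝ) < M' := lt_of_lt_of_le one_pos (le_max_right _ _)
    have hKpos : (0:ℝ) < p M' + 1 := by have := p_nonneg hM'.le; linarith
    have hδ : (0:ℝ) < d ^ 2 / (2 * (p M' + 1)) := by positivity
    filter_upwards [hIoo, Ioo_mem_nhdsGT_of_mem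
      (⟨le_refl (0:ℝ), hδ⟩ : (0:ℝ) ∈ Set.Ico 0 (d ^ 2 / (2 * (p M' + 1))))] with ε hε hε2
    obtain ⟨hρsl, hρsr, hρs0, hpl, hpr⟩ := hbasic ε hε
    have hkey := key ε hε
    have h5 : ε * (2 * (p M' + 1)) < d ^ 2 := by
      have := hε2.2
      rw [lt_div_iff₀ (by positivity)] at this
      linarith
    have hPM : p M' < p (ρs ε) := by nlinarith [hε.1]
    have hM'ρ : M' < ρs ε := by
      by_contra hcon
      push_neg at hcon
      exact absurd (p_mono hρs0.le hM'.le hcon) (not_le.2 hPM)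
    exact le_of_lt (lt_of_le_of_lt (le_max_left M 1) hM'ρ)
  have hPtop : Tendsto (fun ε => p (ρs ε)) (𝓝[>] (0:ℝ)) atTop := p_atTop.comp hρtop
  set r : ℝ → ℝ := fun ε => (ul - us ε) / (us ε - ur) with hrdef
  have hrsq : ∀ᶠ ε in 𝓝[>] (0:ℝ), r ε ^ 2 =
      ((p (ρs ε) + -(p ρl)) / (p (ρs ε) + -(p ρr))) *
        (((ρs ε + -ρl) / (ρs ε + ρl)) * ((ρs ε + ρr) / (ρs ε + -ρr))) := by
    filter_upwards [hIoo] with ε hε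
    obtain ⟨h1, h2, h3⟩ := hmem ε hε
    obtain ⟨hρsl, hρsr, hρs0, hpl, hpr⟩ := hbasic ε hε
    have e1 := heq1 ε hε
    have e2 := heq2 ε hε
    have hne1 : us ε - ur ≠ 0 := by linarith
    have hne2 : p (ρs ε) + -(p ρr) ≠ 0 := by linarith
    have hne3 : ρs ε + ρl ≠ 0 := by linarith
    have hne4 : ρs ε + -ρr ≠ 0 := by linarith
    have hε0 : (0:ℝ) < ε := hε.1
    rw [hrdef]
    simp only [div_pow]
    rw [div_mul_div_comm, div_mul_div_comm, div_eq_div_iff (by positivity)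
      (ne_of_gt (mul_pos (by linarith : (0:ℝ) < p (ρs ε) + -p ρr)
        (mul_pos (by linarith : (0:ℝ) < ρs ε + ρl) (by linarith : (0:ℝ) < ρs ε + -ρr))))]
    linear_combination (2 * (p (ρs ε) - p ρr) * (ρs ε - ρr)) * e1 -
      (2 * (p (ρs ε) - p ρl) * (ρs ε - ρl)) * e2
  have hr2 : Tendsto (fun ε => r ε ^ 2) (𝓝[>] (0:ℝ)) (𝓝 1) := by
    have T1 : Tendsto (fun ε => (p (ρs ε) + -(p ρl)) / (p (ρs ε) + -(p ρr)))
        (𝓝[>] (0:ℝ)) (𝓝 1) := (ratio_tendsto (-(p ρl)) (-(p ρr))).comp hPtop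
    have T2 : Tendsto (fun ε => (ρs ε + -ρl) / (ρs ε + ρl)) (𝓝[>] (0:ℝ)) (𝓝 1) :=
      (ratio_tendsto (-ρl) ρl).comp hρtop
    have T3 : Tendsto (fun ε => (ρs ε + ρr) / (ρs ε + -ρr)) (𝓝[>] (0:ℝ)) (𝓝 1) :=
      (ratio_tendsto ρr (-ρr)).comp hρtop
    have T := T1.mul (T2.mul T3)
    rw [show (1:ℝ) * (1 * 1) = 1 by norm_num] at T
    exact T.congr' (hrsq.mono fun ε hε => hε.symm)
  have hrt : Tendsto r (𝓝[>] (0:ℝ)) (𝓝 1) := by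
    have T : Tendsto (fun ε => Real.sqrt (r ε ^ 2)) (𝓝[>] (0:ℝ)) (𝓝 (Real.sqrt 1)) :=
      (Real.continuous_sqrt.tendsto 1).comp hr2
    rw [Real.sqrt_one] at T
    apply T.congr'
    filter_upwards [hIoo] with ε hε
    obtain ⟨h1, h2, _⟩ := hmem ε hε
    have hrpos : 0 ≤ r ε := by
      rw [hrdef]
      apply div_nonneg <;> linarith
    rw [Real.sqrt_sq hrpos]
  have hust : Tendsto us (𝓝[>] (0:ℝ)) (𝓝 c) := by
    have T : Tendsto (fun ε => (ul + r ε * ur) / (1 + r ε)) (𝓝[>] (0:ℝ))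
        (𝓝 ((ul + 1 * ur) / (1 + 1))) :=
      (tendsto_const_nhds.add (hrt.mul tendsto_const_nhds)).div
        (tendsto_const_nhds.add hrt) (by norm_num)
    have hval : (ul + 1 * ur) / (1 + 1) = c := by rw [hc]; ring
    rw [hval] at T
    apply T.congr'
    filter_upwards [hIoo] with ε hε
    obtain ⟨h1, h2, _⟩ := hmem ε hε
    have hne : us ε - ur ≠ 0 := by linarith
    have hne' : ul - ur ≠ 0 := by linarith
    have hrpos : 0 ≤ r ε := by rw [hrdef]; apply div_nonneg <;> linarith
    show (ul + (ul - us ε) / (us ε - ur) * ur) / (1 + (ul - us ε) / (us ε - ur)) = us ε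
    rw [div_eq_iff (by
      rw [show 1 + (ul - us ε) / (us ε - ur) = (ul - ur) / (us ε - ur) by field_simp; ring]
      positivity)]
    field_simp
    ring
  have hs1t : Tendsto s1 (𝓝[>] (0:ℝ)) (𝓝 c) := by
    have T : Tendsto (fun ε => (us ε + ul) / 2 + (us ε - ul) / 2 * ((ρs ε + ρl) / (ρs ε + -ρl)))
        (𝓝[>] (0:ℝ)) (𝓝 ((c + ul) / 2 + (c - ul) / 2 * 1)) :=
      ((hust.add tendsto_const_nhds).div_const 2).add
        (((hust.sub tendsto_const_nhds).div_const 2).mul ((ratio_tendsto ρl (-ρl)).comp hρtop))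
    rw [show (c + ul) / 2 + (c - ul) / 2 * 1 = c by ring] at T
    apply T.congr'
    filter_upwards [hIoo] with ε hε
    obtain ⟨h1, h2, _⟩ := hmem ε hε
    obtain ⟨hρsl, hρsr, hρs0, hpl, hpr⟩ := hbasic ε hε
    have e1 := heq1 ε hε
    have hne : us ε - ul ≠ 0 := by intro hc0; rw [sub_eq_zero] at hc0; exact absurd hc0 (ne_of_lt h2)
    have hne2 : ρs ε + -ρl ≠ 0 := by linarith
    have hne2' : ρs ε - ρl ≠ 0 := by linarith
    rw [hs1 ε]
    have hεp : ε * (p (ρs ε) - p ρl) = (us ε - ul) ^ 2 * (ρs ε + ρl) / (2 * (ρs ε - ρl)) := by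
      rw [eq_div_iff (by positivity)]
      linear_combination (-2 : ℝ) * e1
    rw [hεp]
    field_simp
    ring
  have hs2t : Tendsto s2 (𝓝[>] (0:ℝ)) (𝓝 c) := by
    have T : Tendsto (fun ε => (us ε + ur) / 2 + (us ε - ur) / 2 * ((ρs ε + ρr) / (ρs ε + -ρr)))
        (𝓝[>] (0:ℝ)) (𝓝 ((c + ur) / 2 + (c - ur) / 2 * 1)) :=
      ((hust.add tendsto_const_nhds).div_const 2).add
        (((hust.sub tendsto_const_nhds).div_const 2).mul ((ratio_tendsto ρr (-ρr)).comp hρtop))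
    rw [show (c + ur) / 2 + (c - ur) / 2 * 1 = c by ring] at T
    apply T.congr'
    filter_upwards [hIoo] with ε hε
    obtain ⟨h1, h2, _⟩ := hmem ε hε
    obtain ⟨hρsl, hρsr, hρs0, hpl, hpr⟩ := hbasic ε hε
    have e2 := heq2 ε hε
    have hne : us ε - ur ≠ 0 := by linarith
    have hne2 : ρs ε + -ρr ≠ 0 := by linarith
    have hne2' : ρs ε - ρr ≠ 0 := by linarith
    rw [hs2 ε]
    have hεp : ε * (p (ρs ε) - p ρr) = (us ε - ur) ^ 2 * (ρs ε + ρr) / (2 * (ρs ε - ρr)) := by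
      rw [eq_div_iff (by positivity)]
      linear_combination (-2 : ℝ) * e2
    rw [hεp]
    field_simp
    ring
  -- measure-theoretic setup
  have hφc : Continuous φ := hφ.continuous
  set M : ℝ := max |ul| |ur| with hM
  have hM0 : (0:ℝ) ≤ M := le_trans (abs_nonneg ul) (le_max_left _ _)
  set ψ : ℝ × ℝ → ℝ := fun z => φ (z.2, z.1) with hψdef
  have hψc : Continuous ψ := hφc.comp (continuous_snd.prodMk continuous_fst)
  have hψcs : HasCompactSupport ψ := by
    have h' : ψ = φ ∘ (Homeomorph.prodComm ℝ ℝ) := rfl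
    rw [h']
    exact hcs.comp_homeomorph _
  have hψint : Integrable ψ (volume : Measure (ℝ × ℝ)) :=
    hψc.integrable_of_hasCompactSupport hψcs
  set μ : Measure (ℝ × ℝ) := (volume.restrict (Set.Ioi (0:ℝ))).prod volume with hμdef
  have hμr : μ = (volume : Measure (ℝ × ℝ)).restrict (Set.Ioi (0:ℝ) ×ˢ Set.univ) := by
    rw [hμdef, ← Measure.restrict_univ (μ := (volume : Measure ℝ)), Measure.prod_restrict,
      Measure.restrict_univ, ← Measure.volume_eq_prod]
  have hψμ : Integrable ψ μ := by rw [hμr]; exact hψint.restrict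
  have hbint : Integrable (fun z => M * |ψ z|) μ := hψμ.abs.const_mul M
  set g : ℝ → ℝ × ℝ → ℝ := fun ε z =>
    (if z.2 < s1 ε * z.1 then ul else if z.2 < s2 ε * z.1 then us ε else ur) * ψ z with hgdef
  have hgm : ∀ ε, AEStronglyMeasurable (g ε) μ := by
    intro ε
    exact ((Measurable.ite (measurableSet_lt measurable_snd (measurable_fst.const_mul _))
      measurable_const (Measurable.ite
        (measurableSet_lt measurable_snd (measurable_fst.const_mul _))
        measurable_const measurable_const)).mul hψc.measurable).aestronglyMeasurable
  have hgbound : ∀ ε ∈ Set.Ioo (0:ℝ) η, ∀ z, ‖g ε z‖ ≤ M * |ψ z| := by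
    intro ε hε z
    obtain ⟨h1, h2, _⟩ := hmem ε hε
    rw [hgdef]
    rw [Real.norm_eq_abs, abs_mul]
    apply mul_le_mul_of_nonneg_right _ (abs_nonneg _)
    have hul : |ul| ≤ M := le_max_left _ _
    have hur : |ur| ≤ M := le_max_right _ _
    split_ifs
    · exact hul
    · rw [abs_le]
      constructor
      · have h3 := neg_abs_le ur
        have h4 := abs_le.1 (le_refl |ur|)
        linarith [neg_le_neg hur]
      · have := le_abs_self ul
        linarith
    · exact hur
  set glim : ℝ × ℝ → ℝ := fun z => (if z.2 < c * z.1 then ul else ur) * ψ z with hlimdef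
  -- the line x = c t is null
  have hlineM : MeasurableSet {z : ℝ × ℝ | z.2 = c * z.1} :=
    measurableSet_eq_fun measurable_snd (measurable_fst.const_mul c)
  have hline : μ {z : ℝ × ℝ | z.2 = c * z.1} = 0 := by
    have h0 : (volume : Measure (ℝ × ℝ)) {z : ℝ × ℝ | z.2 = c * z.1} = 0 := by
      rw [Measure.volume_eq_prod, Measure.measure_prod_null hlineM]
      refine ae_of_all _ (fun t => ?_)
      have hpre : Prod.mk t ⁻¹' {z : ℝ × ℝ | z.2 = c * z.1} = {c * t} := by
        ext x; simp
      simp [hpre]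
    rw [hμr]
    exact le_antisymm (le_trans (Measure.restrict_apply_le _ _) h0.le) (by simp)
  have hne_ae : ∀ᵐ z ∂μ, z.2 ≠ c * z.1 := by
    rw [ae_iff]
    convert hline using 2
    ext z
    simp
  have hmem_ae : ∀ᵐ z ∂μ, z ∈ Set.Ioi (0:ℝ) ×ˢ (Set.univ : Set ℝ) := by
    rw [hμr]
    exact ae_restrict_mem (measurableSet_Ioi.prod MeasurableSet.univ)
  have hptws : ∀ᵐ z ∂μ, Tendsto (fun ε => g ε z) (𝓝[>] (0:ℝ)) (𝓝 (glim z)) := by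
    filter_upwards [hmem_ae, hne_ae] with z hz hzne
    have ht : (0:ℝ) < z.1 := hz.1
    have hT1 : Tendsto (fun ε => s1 ε * z.1) (𝓝[>] (0:ℝ)) (𝓝 (c * z.1)) := hs1t.mul_const _
    have hT2 : Tendsto (fun ε => s2 ε * z.1) (𝓝[>] (0:ℝ)) (𝓝 (c * z.1)) := hs2t.mul_const _
    rcases lt_or_gt_of_ne hzne with hlt | hgt
    · have hgl : glim z = ul * ψ z := by rw [hlimdef]; simp only [if_pos hlt]
      rw [hgl]
      refine Tendsto.congr' ?_ tendsto_const_nhds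
      filter_upwards [hT1.eventually_const_lt hlt] with ε he1
      rw [hgdef]
      simp only [if_pos he1]
    · have hgl : glim z = ur * ψ z := by
        rw [hlimdef]; simp only [if_neg (not_lt.2 hgt.le)]
      rw [hgl]
      refine Tendsto.congr' ?_ tendsto_const_nhds
      filter_upwards [hT1.eventually_lt_const hgt, hT2.eventually_lt_const hgt] with ε he1 he2
      rw [hgdef]
      simp only [if_neg (not_lt.2 he1.le), if_neg (not_lt.2 he2.le)]
  have hDCT : Tendsto (fun ε => ∫ z, g ε z ∂μ) (𝓝[>] (0:ℝ)) (𝓝 (∫ z, glim z ∂μ)) := by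
    refine tendsto_integral_filter_of_dominated_convergence (fun z => M * |ψ z|)
      (Eventually.of_forall hgm) ?_ hbint hptws
    filter_upwards [hIoo] with ε hε
    exact ae_of_all _ (hgbound ε hε)
  have hgint : ∀ ε ∈ Set.Ioo (0:ℝ) η, Integrable (g ε) μ := fun ε hε =>
    hbint.mono' (hgm ε) (ae_of_all _ (hgbound ε hε))
  -- identify the LHS with the product integral
  have hLHS : ∀ᶠ ε in 𝓝[>] (0:ℝ), (∫ t in Set.Ioi (0:ℝ), ∫ x : ℝ,
      (if x < s1 ε * t then ul else if x < s2 ε * t then us ε else ur) * φ (x, t))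
      = ∫ z, g ε z ∂μ := by
    filter_upwards [hIoo] with ε hε
    exact MeasureTheory.integral_integral (hgint ε hε)
  -- identify the limit with the RHS
  set g1 : ℝ × ℝ → ℝ := Set.indicator {z : ℝ × ℝ | z.2 < c * z.1} (fun z => ul * ψ z) with hg1def
  set g2 : ℝ × ℝ → ℝ := Set.indicator {z : ℝ × ℝ | c * z.1 < z.2} (fun z => ur * ψ z) with hg2def
  have hS1 : MeasurableSet {z : ℝ × ℝ | z.2 < c * z.1} :=
    measurableSet_lt measurable_snd (measurable_fst.const_mul c)
  have hS2 : MeasurableSet {z : ℝ × ℝ | c * z.1 < z.2} :=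
    measurableSet_lt (measurable_fst.const_mul c) measurable_snd
  have hg1int : Integrable g1 μ := (hψμ.const_mul ul).indicator hS1
  have hg2int : Integrable g2 μ := (hψμ.const_mul ur).indicator hS2
  have hglim_eq : glim =ᵐ[μ] g1 + g2 := by
    filter_upwards [hne_ae] with z hzne
    rcases lt_or_gt_of_ne hzne with hlt | hgt
    · simp only [hlimdef, hg1def, hg2def, Pi.add_apply, Set.indicator_apply, Set.mem_setOf_eq,
        if_pos hlt, if_neg (not_lt.2 hlt.le)]
      ring
    · simp only [hlimdef, hg1def, hg2def, Pi.add_apply, Set.indicator_apply, Set.mem_setOf_eq,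
        if_pos hgt, if_neg (not_lt.2 hgt.le)]
      ring
  have hint1 : ∫ z, g1 z ∂μ = ∫ t in Set.Ioi (0:ℝ), ∫ x in Set.Iio (c * t), ul * φ (x, t) := by
    rw [← MeasureTheory.integral_integral (f := fun t x => g1 (t, x)) hg1int]
    have h' : (fun t => ∫ x : ℝ, g1 (t, x)) =
        fun t => ∫ x in Set.Iio (c * t), ul * φ (x, t) := by
      funext t
      have h'' : (fun x : ℝ => g1 (t, x)) =
          Set.indicator (Set.Iio (c * t)) (fun x => ul * φ (x, t)) := by
        funext x
        simp [hg1def, hψdef, Set.indicator_apply, Set.mem_Iio]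
      rw [h'', integral_indicator measurableSet_Iio]
    rw [h']
  have hint2 : ∫ z, g2 z ∂μ = ∫ t in Set.Ioi (0:ℝ), ∫ x in Set.Ioi (c * t), ur * φ (x, t) := by
    rw [← MeasureTheory.integral_integral (f := fun t x => g2 (t, x)) hg2int]
    have h' : (fun t => ∫ x : ℝ, g2 (t, x)) =
        fun t => ∫ x in Set.Ioi (c * t), ur * φ (x, t) := by
      funext t
      have h'' : (fun x : ℝ => g2 (t, x)) =
          Set.indicator (Set.Ioi (c * t)) (fun x => ur * φ (x, t)) := by
        funext x
        simp [hg2def, hψdef, Set.indicator_apply, Set.mem_Ioi]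
      rw [h'', integral_indicator measurableSet_Ioi]
    rw [h']
  have hRHS : ∫ z, glim z ∂μ =
      (∫ t in Set.Ioi (0:ℝ), ∫ x in Set.Iio (c * t), ul * φ (x, t)) +
        ∫ t in Set.Ioi (0:ℝ), ∫ x in Set.Ioi (c * t), ur * φ (x, t) := by
    rw [integral_congr_ae hglim_eq, integral_add' hg1int hg2int, hint1, hint2]
  rw [← hRHS]
  exact hDCT.congr' (hLHS.mono fun ε hε => hε.symm)
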